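/- With u_n(v) = a_n v + b_n where a_n = 1/√(2 ln n), b_n = √(2 ln n) − ln(4π ln n)/(2√(2 ln n)), and τ(n) = τ/ln n for fixed τ > 0, for every real v and z: (u_n(v) − √(τ(n))·z)·(1 − τ(n))^{−1/2} = u_n(v + τ − √(2τ)·z) + o(1); in fact for large n the identity holds exactly up to terms vanishing as n → ∞. -/

import Mathlib

open Real Filter Topology

/-!
Write `x = log n`, `s = √(2x)` and `c = log (4πx) / 2`, so that `u_n(v) = (v - c) / s + s` and
`√(τ / x) = √(2τ) / s`. With `w = √(1 - τ / x)` the difference is then exactly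
`s (1/w - 1) + ((v - √(2τ) z - c) / s) (1/w - 1) - τ / s`. Since
`1/w - 1 = (τ / x) / (w (1 + w))` is of order `1 / s²` and `c = o(s)`, every term tends to `0`.
-/

noncomputable def aseq (n : ℕ) : ℝ := 1 / Real.sqrt (2 * Real.log n)

noncomputable def bseq (n : ℕ) : ℝ :=
  Real.sqrt (2 * Real.log n) -
    Real.log (4 * Real.pi * Real.log n) / (2 * Real.sqrt (2 * Real.log n))

noncomputable def useq (n : ℕ) (s : ℝ) : ℝ := aseq n * s + bseq n

/-- `useq n s` unfolds to `gaussThreshold (log n) s`. -/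
noncomputable def gaussThreshold (x s : ℝ) : ℝ :=
  1 / √(2 * x) * s + (√(2 * x) - log (4 * π * x) / (2 * √(2 * x)))

lemma one_div_sqrt_one_sub_sub_one {t : ℝ} (ht : t < 1) :
    1 / √(1 - t) - 1 = t / (√(1 - t) * (1 + √(1 - t))) := by
  have hw : 0 < √(1 - t) := sqrt_pos.2 (by linarith)
  have hw2 : √(1 - t) ^ 2 = 1 - t := sq_sqrt (by linarith)
  field_simp
  linear_combination -hw2

lemma tendsto_log_mul_div_sqrt_mul {a b : ℝ} (ha : 0 < a) (hb : 0 < b) :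
    Tendsto (fun x => log (a * x) / √(b * x)) atTop (𝓝 0) := by
  have hlog : Tendsto (fun y => log y / √y) atTop (𝓝 0) := by
    simpa only [← sqrt_eq_rpow] using
      (isLittleO_log_rpow_atTop one_half_pos).tendsto_div_nhds_zero
  have := (hlog.comp (tendsto_id.const_mul_atTop ha)).const_mul √(a / b)
  rw [mul_zero] at this
  refine this.congr' ?_
  filter_upwards [eventually_gt_atTop 0] with x hx
  simp only [Function.comp_apply, id]
  rw [sqrt_div ha.le, sqrt_mul ha.le, sqrt_mul hb.le]
  have : 0 < √a := sqrt_pos.2 ha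
  have : 0 < √b := sqrt_pos.2 hb
  have : 0 < √x := sqrt_pos.2 hx
  field_simp

lemma tendsto_sqrt_one_sub_div_atTop (τ : ℝ) :
    Tendsto (fun x => √(1 - τ / x)) atTop (𝓝 1) := by
  have h : Tendsto (fun x => 1 - τ / x) atTop (𝓝 1) := by
    simpa using tendsto_const_nhds.sub ((tendsto_const_nhds (x := τ)).div_atTop tendsto_id)
  simpa using h.sqrt

lemma tendsto_one_div_sqrt_one_sub_div_sub_one (τ : ℝ) :
    Tendsto (fun x => 1 / √(1 - τ / x) - 1) atTop (𝓝 0) := by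
  simpa using ((tendsto_sqrt_one_sub_div_atTop τ).inv₀ one_ne_zero).sub_const 1

lemma tendsto_one_div_sqrt_two_mul_atTop :
    Tendsto (fun x : ℝ => 1 / √(2 * x)) atTop (𝓝 0) := by
  simpa only [one_div, Function.comp_def, id] using
    tendsto_inv_atTop_zero.comp (tendsto_sqrt_atTop.comp (tendsto_id.const_mul_atTop two_pos))

lemma tendsto_sqrt_two_mul_mul_one_div_sqrt_one_sub_div_sub_one (τ : ℝ) :
    Tendsto (fun x => √(2 * x) * (1 / √(1 - τ / x) - 1)) atTop (𝓝 0) := by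
  have hlim := tendsto_sqrt_one_sub_div_atTop τ
  have := (tendsto_one_div_sqrt_two_mul_atTop.const_mul (2 * τ)).div
    (hlim.mul (hlim.const_add 1)) (by norm_num)
  rw [mul_zero, zero_div] at this
  refine this.congr' ?_
  filter_upwards [eventually_gt_atTop 0, eventually_gt_atTop τ] with x hx hτx
  have hs2 : √(2 * x) ^ 2 = 2 * x := sq_sqrt (by positivity)
  have hw : 0 < √(1 - τ / x) := sqrt_pos.2 (by rw [sub_pos, div_lt_one hx]; exact hτx)
  rw [Pi.div_apply, one_div_sqrt_one_sub_sub_one ((div_lt_one hx).2 hτx)]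
  generalize √(1 - τ / x) = w at hw ⊢
  field_simp
  linear_combination -τ * hs2

lemma gaussThreshold_shift_sub_eq {x : ℝ} (hx : 0 < x) {τ : ℝ} (hτx : τ < x) (v z : ℝ) :
    (gaussThreshold x v - √(τ / x) * z) / √(1 - τ / x) -
        gaussThreshold x (v + τ - √(2 * τ) * z) =
      √(2 * x) * (1 / √(1 - τ / x) - 1) +
        ((v - √(2 * τ) * z) / √(2 * x) - log (4 * π * x) / (2 * √(2 * x))) *
          (1 / √(1 - τ / x) - 1) - τ / √(2 * x) := by
  have hw : 0 < √(1 - τ / x) := sqrt_pos.2 (by rw [sub_pos, div_lt_one hx]; exact hτx)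
  have hτ : √(τ / x) = √(2 * τ) / √(2 * x) := by
    rw [← sqrt_div' _ (by positivity), mul_div_mul_left _ _ two_ne_zero]
  rw [gaussThreshold, gaussThreshold, hτ]
  field_simp
  ring

lemma tendsto_gaussThreshold_shift_sub (τ v z : ℝ) :
    Tendsto (fun x => (gaussThreshold x v - √(τ / x) * z) / √(1 - τ / x) -
        gaussThreshold x (v + τ - √(2 * τ) * z)) atTop (𝓝 0) := by
  have hinv := tendsto_one_div_sqrt_two_mul_atTop
  have hlog : Tendsto (fun x => log (4 * π * x) / (2 * √(2 * x))) atTop (𝓝 0) := by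
    simpa [div_mul_eq_div_div_swap] using
      (tendsto_log_mul_div_sqrt_mul (by positivity : (0 : ℝ) < 4 * π) two_pos).div_const 2
  have hcoef : Tendsto (fun x => (v - √(2 * τ) * z) / √(2 * x) -
      log (4 * π * x) / (2 * √(2 * x))) atTop (𝓝 0) := by
    simpa [div_eq_mul_one_div (v - _)] using (hinv.const_mul (v - √(2 * τ) * z)).sub hlog
  have := ((tendsto_sqrt_two_mul_mul_one_div_sqrt_one_sub_div_sub_one τ).add
    (hcoef.mul (tendsto_one_div_sqrt_one_sub_div_sub_one τ))).sub (hinv.const_mul τ)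
  simp only [add_zero, mul_zero, sub_zero] at this
  refine this.congr' ?_
  filter_upwards [eventually_gt_atTop 0, eventually_gt_atTop τ] with x hx hτx
  rw [gaussThreshold_shift_sub_eq hx hτx, mul_one_div]

theorem stmt_11_general (τ : ℝ) (v z : ℝ) :
    Tendsto (fun n : ℕ =>
        (useq n v - Real.sqrt (τ / Real.log n) * z) / Real.sqrt (1 - τ / Real.log n) -
          useq n (v + τ - Real.sqrt (2 * τ) * z))
      atTop (nhds 0) :=
  (tendsto_gaussThreshold_shift_sub τ v z).comp
    (tendsto_log_atTop.comp tendsto_natCast_atTop_atTop)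

theorem stmt_11 (τ : ℝ) (hτ : 0 < τ) (v z : ℝ) :
    Tendsto (fun n : ℕ =>
        (useq n v - Real.sqrt (τ / Real.log n) * z) / Real.sqrt (1 - τ / Real.log n) -
          useq n (v + τ - Real.sqrt (2 * τ) * z))
      atTop (nhds 0) :=
  stmt_11_general τ v z
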